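/- arXiv:1402.3712 — 2 statements merged into one kernel-verified Lean document; each statement's English description precedes it below -/
import Mathlib

section
/- (Zeros of the rate functional, case E = ∅.) Assume ξ(x) > 0 for all x ∈ X (with X compact and assumptions (A1)–(A2)). Then μ̄(τ) < ∞, and I(ν) = 0 if and only if ν = μ, where μ(dx) = τ(x)μ̄(dx)/μ̄(τ). -/
/-
Positivity of `ξ` at a point yields a finite exponential moment `∫ e^{rτ} dμ̄ < ∞` (some `r > 0`)
on a ball around it; by compactness finitely many balls cover `X`, so `e^{rτ}` is integrable
for one `r > 0`. This bounds `μ̄(τ)` and gives `ξ ≥ r` everywhere, so `I(ν) = 0` kills the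
singular part of `ν`; the vanishing relative entropy then says that the `1/τ`-tilt of `ν` is
`μ̄`, and undoing the tilt gives `ν = τ μ̄ / μ̄(τ)`.
-/

open MeasureTheory ENNReal Filter Set Topology
open scoped NNReal

noncomputable def eexp (a : ℝ≥0∞) : ℝ≥0∞ :=
  if a = ⊤ then ⊤ else ENNReal.ofReal (Real.exp a.toReal)

noncomputable def xiSet {X : Type*} [MeasurableSpace X] (μ : Measure X) (τ : X → ℝ≥0∞)
    (A : Set X) : ℝ≥0∞ :=
  sSup {c : ℝ≥0∞ | ∃ r : ℝ≥0, c = (r : ℝ≥0∞) ∧ ∫⁻ x in A, eexp ((r : ℝ≥0∞) * τ x) ∂μ < ⊤}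

noncomputable def xiDelta {X : Type*} [MeasurableSpace X] [PseudoMetricSpace X]
    (μ : Measure X) (τ : X → ℝ≥0∞) (δ : ℝ) (x : X) : ℝ≥0∞ :=
  xiSet μ τ (Metric.ball x δ)

noncomputable def xi {X : Type*} [MeasurableSpace X] [PseudoMetricSpace X]
    (μ : Measure X) (τ : X → ℝ≥0∞) (x : X) : ℝ≥0∞ :=
  ⨆ (δ : ℝ) (_ : 0 < δ), xiDelta μ τ δ x

/-- The convex function `h(ρ) = ρ(log ρ − 1) + 1`, extended to `[0,∞]`. -/
noncomputable def hEnt (ρ : ℝ≥0∞) : ℝ≥0∞ :=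
  if ρ = ⊤ then ⊤ else ENNReal.ofReal (ρ.toReal * (Real.log ρ.toReal - 1) + 1)

/-- Relative entropy `H(ν|μ) = ∫ h(dν/dμ) dμ` if `ν ≪ μ`, and `+∞` otherwise. -/
noncomputable def relEnt {α : Type*} [MeasurableSpace α] (ν μ : Measure α) : ℝ≥0∞ :=
  open scoped Classical in
  if ν ≪ μ then ∫⁻ x, hEnt (ν.rnDeriv μ x) ∂μ else ⊤

/-- The absolutely continuous part of `ν` with respect to `μ`. -/
noncomputable def absPart {α : Type*} [MeasurableSpace α] (ν μ : Measure α) : Measure α :=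
  μ.withDensity (ν.rnDeriv μ)

/-- The normalized measure `ν̄(dx) = (1/τ(x)) ν(dx) / ν(1/τ)`. -/
noncomputable def tauTilt {X : Type*} [MeasurableSpace X] (τ : X → ℝ≥0∞) (ν : Measure X) :
    Measure X :=
  (∫⁻ x, (τ x)⁻¹ ∂ν)⁻¹ • ν.withDensity (fun x => (τ x)⁻¹)

/-- The large deviations rate functional
`I(ν) = ν_a(1/τ) H(ν̄_a|μ̄) + ν_s(ξ)` if `ν_a(1/τ) < ∞`, `+∞` otherwise. -/
noncomputable def Ifun {X : Type*} [MeasurableSpace X] [PseudoMetricSpace X]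
    (μ : Measure X) (τ : X → ℝ≥0∞) (ν : Measure X) : ℝ≥0∞ :=
  if ∫⁻ x, (τ x)⁻¹ ∂(absPart ν μ) = ⊤ then ⊤
  else (∫⁻ x, (τ x)⁻¹ ∂(absPart ν μ)) * relEnt (tauTilt τ (absPart ν μ)) μ
    + ∫⁻ x, xi μ τ x ∂(ν.singularPart μ)

/-- `ξ^∞`: the exponential-moment threshold at infinity. -/
noncomputable def xiInf {X : Type*} [MeasurableSpace X] [TopologicalSpace X]
    (μ : Measure X) (τ : X → ℝ≥0∞) : ℝ≥0∞ :=
  sSup {c : ℝ≥0∞ | ∃ r : ℝ≥0, c = (r : ℝ≥0∞) ∧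
    ∃ K : Set X, IsCompact K ∧ ∫⁻ x in Kᶜ, eexp ((r : ℝ≥0∞) * τ x) ∂μ < ⊤}

lemma le_eexp (a : ℝ≥0∞) : a ≤ eexp a := by
  unfold eexp
  split_ifs with ha
  · exact le_top
  · conv_lhs => rw [← ENNReal.ofReal_toReal ha]
    exact ENNReal.ofReal_le_ofReal (by linarith [Real.add_one_le_exp a.toReal])

lemma eexp_mono : Monotone eexp := by
  intro a b hab
  unfold eexp
  split_ifs with ha hb hb
  · exact le_top
  · exact absurd (top_le_iff.mp (ha ▸ hab)) hb
  · exact le_top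
  · exact ENNReal.ofReal_le_ofReal (Real.exp_le_exp.mpr (ENNReal.toReal_mono hb hab))

section ExpMoment

variable {X : Type*} [MeasurableSpace X] (μ : Measure X) (τ : X → ℝ≥0∞)

def HasExpMomentOn (s : Set X) : Prop :=
  ∃ r : ℝ≥0, 0 < r ∧ ∫⁻ x in s, eexp (r * τ x) ∂μ < ⊤

variable {μ τ}

lemma setLIntegral_eexp_mul_mono {a b : ℝ≥0∞} (hab : a ≤ b) (s : Set X) :
    ∫⁻ x in s, eexp (a * τ x) ∂μ ≤ ∫⁻ x in s, eexp (b * τ x) ∂μ :=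
  lintegral_mono fun x => eexp_mono (mul_le_mul_left hab (τ x))

lemma hasExpMomentOn_empty : HasExpMomentOn μ τ ∅ :=
  ⟨1, one_pos, by simp⟩

lemma HasExpMomentOn.mono {s t : Set X} (hst : s ⊆ t) (ht : HasExpMomentOn μ τ t) :
    HasExpMomentOn μ τ s :=
  let ⟨r, hr, hint⟩ := ht
  ⟨r, hr, (lintegral_mono_set hst).trans_lt hint⟩

lemma HasExpMomentOn.union {s t : Set X} (hs : HasExpMomentOn μ τ s)
    (ht : HasExpMomentOn μ τ t) : HasExpMomentOn μ τ (s ∪ t) := by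
  obtain ⟨r, hr, hrs⟩ := hs
  obtain ⟨r', hr', hrt⟩ := ht
  refine ⟨min r r', lt_min hr hr', (lintegral_union_le _ s t).trans_lt ?_⟩
  exact ENNReal.add_lt_top.mpr
    ⟨(setLIntegral_eexp_mul_mono (by exact_mod_cast min_le_left r r') s).trans_lt hrs,
      (setLIntegral_eexp_mul_mono (by exact_mod_cast min_le_right r r') t).trans_lt hrt⟩

lemma lintegral_lt_top_of_hasExpMomentOn_univ (h : HasExpMomentOn μ τ univ) :
    ∫⁻ x, τ x ∂μ < ⊤ := by
  obtain ⟨r, hr, hint⟩ := h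
  rw [setLIntegral_univ] at hint
  have hr0 : (r : ℝ≥0∞) ≠ 0 := by exact_mod_cast hr.ne'
  calc ∫⁻ x, τ x ∂μ ≤ ∫⁻ x, (r : ℝ≥0∞)⁻¹ * eexp (r * τ x) ∂μ := by
        refine lintegral_mono fun x => ?_
        rw [← ENNReal.div_eq_inv_mul, ENNReal.le_div_iff_mul_le (Or.inl hr0) (Or.inl coe_ne_top),
          mul_comm]
        exact le_eexp _
    _ = (r : ℝ≥0∞)⁻¹ * ∫⁻ x, eexp (r * τ x) ∂μ :=
        lintegral_const_mul' _ _ (ENNReal.inv_ne_top.mpr hr0)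
    _ < ⊤ := ENNReal.mul_lt_top (ENNReal.inv_lt_top.mpr (pos_iff_ne_zero.mpr hr0)) hint

section Metric

variable [PseudoMetricSpace X]

lemma exists_hasExpMomentOn_ball_of_pos_xi {x : X} (hx : 0 < xi μ τ x) :
    ∃ δ > 0, HasExpMomentOn μ τ (Metric.ball x δ) := by
  obtain ⟨δ, hδ⟩ := lt_iSup_iff.mp hx
  obtain ⟨hδ0, hδ'⟩ := lt_iSup_iff.mp hδ
  obtain ⟨_, ⟨r, rfl, hint⟩, hr⟩ := lt_sSup_iff.mp hδ'
  exact ⟨δ, hδ0, r, by exact_mod_cast hr, hint⟩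

lemma hasExpMomentOn_univ_of_pos_xi [CompactSpace X] (hpos : ∀ x, 0 < xi μ τ x) :
    HasExpMomentOn μ τ univ := by
  refine isCompact_univ.induction_on hasExpMomentOn_empty (fun _ _ => HasExpMomentOn.mono)
    (fun _ _ => HasExpMomentOn.union) fun x _ => ?_
  obtain ⟨δ, hδ, hball⟩ := exists_hasExpMomentOn_ball_of_pos_xi (hpos x)
  exact ⟨_, mem_nhdsWithin_of_mem_nhds (Metric.ball_mem_nhds x hδ), hball⟩

lemma exists_ne_zero_le_xi_of_hasExpMomentOn_univ (h : HasExpMomentOn μ τ univ) :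
    ∃ r : ℝ≥0∞, r ≠ 0 ∧ ∀ x, r ≤ xi μ τ x := by
  obtain ⟨r, hr, hint⟩ := h
  refine ⟨r, by exact_mod_cast hr.ne', fun x => ?_⟩
  calc (r : ℝ≥0∞) ≤ xiDelta μ τ 1 x :=
        le_sSup ⟨r, rfl, (lintegral_mono_set (subset_univ _)).trans_lt hint⟩
    _ ≤ xi μ τ x := le_iSup₂ (f := fun δ (_ : 0 < δ) => xiDelta μ τ δ x) 1 one_pos

end Metric

end ExpMoment

lemma hEnt_one : hEnt 1 = 0 := by
  simp [hEnt]

lemma eq_one_of_hEnt_eq_zero {a : ℝ≥0∞} (h : hEnt a = 0) : a = 1 := by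
  unfold hEnt at h
  split_ifs at h with ha
  · exact absurd h top_ne_zero
  rw [ENNReal.ofReal_eq_zero] at h
  refine (ENNReal.toReal_eq_one_iff a).mp ?_
  set t := a.toReal
  have ht : 0 ≤ t := ENNReal.toReal_nonneg
  rcases ht.eq_or_lt with h0 | h0
  · rw [← h0] at h; norm_num at h
  -- `log (1/t) < 1/t - 1` for `t ≠ 1` rearranges to `t (log t - 1) + 1 > 0`.
  by_contra hne
  have hlog := Real.log_lt_sub_one_of_pos (inv_pos.mpr h0) (inv_ne_one.mpr hne)
  rw [Real.log_inv] at hlog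
  have := mul_lt_mul_of_pos_left hlog h0
  rw [mul_sub, mul_inv_cancel₀ h0.ne'] at this
  linarith

lemma measurable_hEnt : Measurable hEnt := by
  unfold hEnt
  refine Measurable.ite (measurableSet_singleton ⊤) measurable_const
    (ENNReal.measurable_ofReal.comp (Measurable.add_const ?_ 1))
  exact ENNReal.measurable_toReal.mul
    ((Real.measurable_log.comp ENNReal.measurable_toReal).sub_const 1)

section RelEnt

variable {α : Type*} [MeasurableSpace α] {ν μ : Measure α}

lemma relEnt_self (μ : Measure α) [SigmaFinite μ] : relEnt μ μ = 0 := by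
  rw [relEnt, if_pos Measure.AbsolutelyContinuous.rfl]
  refine lintegral_eq_zero_iff (measurable_hEnt.comp (Measure.measurable_rnDeriv _ _)) |>.mpr ?_
  filter_upwards [Measure.rnDeriv_self μ] with x hx
  simp [hx, hEnt_one]

lemma eq_of_relEnt_eq_zero [SigmaFinite μ] [ν.HaveLebesgueDecomposition μ]
    (h : relEnt ν μ = 0) : ν = μ := by
  have hac : ν ≪ μ := by
    by_contra hac
    simp [relEnt, hac] at h
  rw [relEnt, if_pos hac] at h
  have hone : ν.rnDeriv μ =ᵐ[μ] 1 := by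
    filter_upwards [(lintegral_eq_zero_iff
      (measurable_hEnt.comp (Measure.measurable_rnDeriv _ _))).mp h] with x hx
    exact eq_one_of_hEnt_eq_zero hx
  rw [← Measure.withDensity_rnDeriv_eq ν μ hac, withDensity_congr_ae hone, withDensity_one]

end RelEnt

lemma Measurable.ennreal_inv {α : Type*} [MeasurableSpace α] {f : α → ℝ≥0∞}
    (hf : Measurable f) : Measurable fun x => (f x)⁻¹ :=
  hf.inv

lemma lintegral_ne_zero_of_ae_ne_zero {α : Type*} [MeasurableSpace α] {μ : Measure α}
    {f : α → ℝ≥0∞} (hf : Measurable f) (hμ : μ ≠ 0) (h : ∀ᵐ x ∂μ, f x ≠ 0) :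
    ∫⁻ x, f x ∂μ ≠ 0 := by
  rw [Ne, lintegral_eq_zero_iff hf]
  exact fun hf0 => hμ (ae_eq_bot.mp (eventually_false_iff_eq_bot.mp
    ((h.and hf0).mono fun _ hx => hx.1 hx.2)))

section TauTilt

variable {X : Type*} [MeasurableSpace X] {μ ν : Measure X} {τ : X → ℝ≥0∞}

lemma tauTilt_smul (τ : X → ℝ≥0∞) (ν : Measure X) {c : ℝ≥0∞} (hc0 : c ≠ 0) (hct : c ≠ ⊤) :
    tauTilt τ (c • ν) = tauTilt τ ν := by
  rw [tauTilt, tauTilt, lintegral_smul_measure, withDensity_smul_measure, smul_smul, smul_eq_mul,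
    ENNReal.mul_inv (Or.inl hc0) (Or.inl hct), mul_right_comm, ENNReal.inv_mul_cancel hc0 hct,
    one_mul]

lemma inv_mul_self_ae_eq_one (h0 : ∀ᵐ x ∂μ, τ x ≠ 0) (hinf : ∀ᵐ x ∂μ, τ x ≠ ⊤) :
    (fun x => (τ x)⁻¹ * τ x) =ᵐ[μ] 1 := by
  filter_upwards [h0, hinf] with x hx0 hxt
  exact ENNReal.inv_mul_cancel hx0 hxt

lemma lintegral_inv_withDensity_self [IsProbabilityMeasure μ] (hτ : Measurable τ)
    (h0 : ∀ᵐ x ∂μ, τ x ≠ 0) (hinf : ∀ᵐ x ∂μ, τ x ≠ ⊤) :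
    ∫⁻ x, (τ x)⁻¹ ∂(μ.withDensity τ) = 1 := by
  rw [lintegral_withDensity_eq_lintegral_mul₀ hτ.aemeasurable hτ.ennreal_inv.aemeasurable]
  simp_rw [Pi.mul_apply, mul_comm (τ _)]
  rw [lintegral_congr_ae (inv_mul_self_ae_eq_one h0 hinf)]
  simp

lemma tauTilt_withDensity_self [IsProbabilityMeasure μ] (hτ : Measurable τ)
    (h0 : ∀ᵐ x ∂μ, τ x ≠ 0) (hinf : ∀ᵐ x ∂μ, τ x ≠ ⊤) :
    tauTilt τ (μ.withDensity τ) = μ := by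
  rw [tauTilt, lintegral_inv_withDensity_self hτ h0 hinf, inv_one, one_smul,
    ← withDensity_mul μ hτ hτ.ennreal_inv, mul_comm]
  exact (withDensity_congr_ae (inv_mul_self_ae_eq_one h0 hinf)).trans withDensity_one

lemma eq_smul_withDensity_of_tauTilt_eq (hτ : Measurable τ) (h0 : ∀ᵐ x ∂μ, τ x ≠ 0)
    (hinf : ∀ᵐ x ∂μ, τ x ≠ ⊤) (hνμ : ν ≪ μ) (hc0 : ∫⁻ x, (τ x)⁻¹ ∂ν ≠ 0)
    (hct : ∫⁻ x, (τ x)⁻¹ ∂ν ≠ ⊤) (h : tauTilt τ ν = μ) :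
    ν = (∫⁻ x, (τ x)⁻¹ ∂ν) • μ.withDensity τ := by
  have hdens : ν.withDensity (fun x => (τ x)⁻¹) = (∫⁻ x, (τ x)⁻¹ ∂ν) • μ := by
    rw [← h, tauTilt, smul_smul, ENNReal.mul_inv_cancel hc0 hct, one_smul]
  calc ν = ν.withDensity (fun x => (τ x)⁻¹ * τ x) := by
        rw [withDensity_congr_ae (hνμ.ae_le (inv_mul_self_ae_eq_one h0 hinf)), withDensity_one]
    _ = _ := by
        rw [← Pi.mul_def, withDensity_mul ν hτ.ennreal_inv hτ, hdens, withDensity_smul_measure]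

instance isFiniteMeasure_tauTilt : IsFiniteMeasure (tauTilt τ ν) :=
  ⟨by
    rw [tauTilt, Measure.smul_apply, withDensity_apply _ MeasurableSet.univ, setLIntegral_univ,
      smul_eq_mul]
    exact (ENNReal.inv_mul_le_one _).trans_lt one_lt_top⟩

lemma lintegral_inv_ne_zero (hτ : Measurable τ) (hinf : ∀ᵐ x ∂μ, τ x ≠ ⊤) (hνμ : ν ≪ μ)
    (hν : ν ≠ 0) : ∫⁻ x, (τ x)⁻¹ ∂ν ≠ 0 :=
  lintegral_ne_zero_of_ae_ne_zero hτ.ennreal_inv hν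
    (by filter_upwards [hνμ.ae_le hinf] with x hx using ENNReal.inv_ne_zero.mpr hx)

end TauTilt

section RateFunction

variable {X : Type*} [MeasurableSpace X] [PseudoMetricSpace X] {μ ν : Measure X}
  {τ : X → ℝ≥0∞} {r : ℝ≥0∞}

lemma singularPart_eq_zero_of_Ifun_eq_zero (hr : r ≠ 0) (hxi : ∀ x, r ≤ xi μ τ x)
    (hI : Ifun μ τ ν = 0) : ν.singularPart μ = 0 := by
  rw [Ifun] at hI
  split_ifs at hI
  · exact absurd hI top_ne_zero
  have hle : r * ν.singularPart μ univ ≤ 0 := by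
    rw [← (add_eq_zero.mp hI).2, ← lintegral_const]
    exact lintegral_mono hxi
  exact Measure.measure_univ_eq_zero.mp
    ((mul_eq_zero.mp (nonpos_iff_eq_zero.mp hle)).resolve_left hr)

lemma Ifun_eq_zero_iff [SigmaFinite μ] [ν.HaveLebesgueDecomposition μ] (hτ : Measurable τ)
    (hinf : ∀ᵐ x ∂μ, τ x ≠ ⊤) (hν : ν ≠ 0) (hr : r ≠ 0) (hxi : ∀ x, r ≤ xi μ τ x) :
    Ifun μ τ ν = 0 ↔ ν ≪ μ ∧ ∫⁻ x, (τ x)⁻¹ ∂ν ≠ ⊤ ∧ tauTilt τ ν = μ := by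
  constructor
  · intro hI
    have hνμ : ν ≪ μ := (Measure.singularPart_eq_zero ν μ).mp
      (singularPart_eq_zero_of_Ifun_eq_zero hr hxi hI)
    rw [Ifun, absPart, Measure.withDensity_rnDeriv_eq ν μ hνμ] at hI
    split_ifs at hI with hct
    · exact absurd hI top_ne_zero
    have hrel := (mul_eq_zero.mp (add_eq_zero.mp hI).1).resolve_left
      (lintegral_inv_ne_zero hτ hinf hνμ hν)
    exact ⟨hνμ, hct, eq_of_relEnt_eq_zero hrel⟩
  · rintro ⟨hνμ, hct, htilt⟩
    rw [Ifun, absPart, Measure.withDensity_rnDeriv_eq ν μ hνμ, if_neg hct, htilt, relEnt_self,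
      (Measure.singularPart_eq_zero ν μ).mpr hνμ]
    simp

end RateFunction

theorem stmt17_general {X : Type*} [MetricSpace X] [CompactSpace X] [MeasurableSpace X]
    (μ : Measure X) [IsProbabilityMeasure μ] (τ : X → ℝ≥0∞) (hτ : Measurable τ)
    (h0 : μ {x | τ x = 0} = 0) (hinf : μ {x | τ x = ⊤} = 0)
    (hpos : ∀ x : X, 0 < xi μ τ x) :
    (∫⁻ x, τ x ∂μ < ⊤) ∧
      ∀ ν : Measure X, IsProbabilityMeasure ν →
        (Ifun μ τ ν = 0 ↔ ν = (∫⁻ x, τ x ∂μ)⁻¹ • μ.withDensity τ) := by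
  have hmom := hasExpMomentOn_univ_of_pos_xi hpos
  have hT := lintegral_lt_top_of_hasExpMomentOn_univ hmom
  obtain ⟨r, hr, hxi⟩ := exists_ne_zero_le_xi_of_hasExpMomentOn_univ hmom
  have h0' : ∀ᵐ x ∂μ, τ x ≠ 0 := ae_iff.mpr (by simpa using h0)
  have hinf' : ∀ᵐ x ∂μ, τ x ≠ ⊤ := ae_iff.mpr (by simpa using hinf)
  have hT0 : ∫⁻ x, τ x ∂μ ≠ 0 := lintegral_ne_zero_of_ae_ne_zero hτ (NeZero.ne μ) h0'
  refine ⟨hT, fun ν hν => ?_⟩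
  rw [Ifun_eq_zero_iff hτ hinf' (IsProbabilityMeasure.ne_zero ν) hr hxi]
  constructor
  · rintro ⟨hνμ, hct, htilt⟩
    have hνeq := eq_smul_withDensity_of_tauTilt_eq hτ h0' hinf' hνμ
      (lintegral_inv_ne_zero hτ hinf' hνμ (IsProbabilityMeasure.ne_zero ν)) hct htilt
    have hmass : (∫⁻ x, (τ x)⁻¹ ∂ν) * ∫⁻ x, τ x ∂μ = 1 := by
      have hν1 := measure_univ (μ := ν)
      rwa [hνeq, Measure.smul_apply, withDensity_apply _ MeasurableSet.univ, setLIntegral_univ,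
        smul_eq_mul] at hν1
    rwa [← ENNReal.eq_inv_of_mul_eq_one_left hmass]
  · rintro rfl
    refine ⟨(withDensity_absolutelyContinuous μ τ).smul_left _, ?_, ?_⟩
    · rw [lintegral_smul_measure, lintegral_inv_withDensity_self hτ h0' hinf']
      simpa using hT0
    · rw [tauTilt_smul _ _ (ENNReal.inv_ne_zero.mpr hT.ne) (ENNReal.inv_ne_top.mpr hT0),
        tauTilt_withDensity_self hτ h0' hinf']

/-- Remark `r:conv`, case `E = ∅`: if `ξ > 0` everywhere on a compact
space, then `μ̄(τ) < ∞`, and `I(ν) = 0` iff `ν = μ` where `μ(dx) = τ(x)μ̄(dx)/μ̄(τ)`. -/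
theorem stmt17 {X : Type*} [MetricSpace X] [CompactSpace X] [MeasurableSpace X] [BorelSpace X]
    (μ : Measure X) [IsProbabilityMeasure μ] (τ : X → ℝ≥0∞) (hτ : Measurable τ)
    (h0 : μ {x | τ x = 0} = 0) (hinf : μ {x | τ x = ⊤} = 0)
    (hA2 : μ {x | xi μ τ x < ⊤} = 0)
    (hpos : ∀ x : X, 0 < xi μ τ x) :
    (∫⁻ x, τ x ∂μ < ⊤) ∧
      ∀ ν : Measure X, IsProbabilityMeasure ν →
        (Ifun μ τ ν = 0 ↔ ν = (∫⁻ x, τ x ∂μ)⁻¹ • μ.withDensity τ) :=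
  stmt17_general μ τ hτ h0 hinf hpos
end

section
/- (Reduction to compact state space.) Embed the Polish space X continuously into the compact space [0,1]^ℕ and let Y be the closure of X. Extend μ̄ by μ̄(Y∖X) = 0 and τ by τ = +∞ on Y∖X. If assumption (A3) holds on X (ξ^∞ = +∞), then ξ_Y(x) = +∞ for all x ∈ Y∖X, where ξ_Y is the local exponential-moment threshold computed in Y. -/
open MeasureTheory ENNReal Filter Set Topology
open scoped NNReal

/-! A small enough ball in `Y` around a point outside `e(X)` avoids the compact set `e(K)`, so
its trace on `X` lies in `Kᶜ`. Under (A3), for every order `r` the exponential moment of order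
`r` is finite on some `Kᶜ`, hence on that trace, and the push-forward `μ̄` does not charge the
rest of the ball, where `τ = +∞`. -/

section XiSet

variable {X : Type*} [MeasurableSpace X] (μ : Measure X) (τ : X → ℝ≥0∞)

theorem xiSet_anti {A B : Set X} (hAB : A ⊆ B) : xiSet μ τ B ≤ xiSet μ τ A := by
  refine sSup_le_sSup ?_
  rintro _ ⟨r, rfl, hint⟩
  exact ⟨r, rfl, (lintegral_mono_set hAB).trans_lt hint⟩

theorem xiInf_le_of_forall_isCompact [TopologicalSpace X] {c : ℝ≥0∞}
    (h : ∀ K : Set X, IsCompact K → xiSet μ τ Kᶜ ≤ c) : xiInf μ τ ≤ c := by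
  refine sSup_le ?_
  rintro _ ⟨r, rfl, K, hK, hint⟩
  exact (le_sSup ⟨r, rfl, hint⟩ : (r : ℝ≥0∞) ≤ xiSet μ τ Kᶜ).trans (h K hK)

theorem xiSet_preimage_le_xiSet_map {Y : Type*} [MeasurableSpace Y] {e : X → Y}
    (he : Measurable e) (he_inj : Function.Injective e) (f : Y → ℝ≥0∞) {A : Set Y}
    (hA : MeasurableSet A) :
    xiSet μ τ (e ⁻¹' A) ≤ xiSet (μ.map e) (Function.extend e τ f) A := by
  refine sSup_le_sSup ?_
  rintro _ ⟨r, rfl, hint⟩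
  refine ⟨r, rfl, lt_of_le_of_lt ?_ hint⟩
  rw [Measure.restrict_map he hA]
  refine (lintegral_map_le _ e).trans_eq ?_
  simp only [he_inj.extend_apply]

theorem xiDelta_le_xi [PseudoMetricSpace X] {δ : ℝ} (hδ : 0 < δ) (x : X) :
    xiDelta μ τ δ x ≤ xi μ τ x :=
  le_iSup₂ (f := fun δ (_ : 0 < δ) => xiDelta μ τ δ x) δ hδ

end XiSet

theorem exists_ball_preimage_subset_compl {X Y : Type*} [TopologicalSpace X]
    [MetricSpace Y] {e : X → Y} (he : Continuous e) {K : Set X} (hK : IsCompact K) {y : Y}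
    (hy : y ∉ Set.range e) : ∃ δ > 0, e ⁻¹' Metric.ball y δ ⊆ Kᶜ := by
  have hyK : y ∈ (e '' K)ᶜ := fun h => hy (Set.image_subset_range e K h)
  obtain ⟨δ, hδ, hball⟩ :=
    Metric.isOpen_iff.1 (hK.image he).isClosed.isOpen_compl y hyK
  exact ⟨δ, hδ, fun x hx hxK => hball hx ⟨x, hxK, rfl⟩⟩

theorem stmt18_general {X Y : Type*} [MetricSpace X] [MeasurableSpace X] [BorelSpace X]
    [MetricSpace Y] [MeasurableSpace Y] [BorelSpace Y]
    (e : X → Y) (he : Topology.IsEmbedding e)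
    (μ : Measure X) (τ : X → ℝ≥0∞)
    (hA3 : xiInf μ τ = ⊤) :
    ∀ y : Y, y ∉ Set.range e →
      xi (μ.map e) (Function.extend e τ fun _ => ⊤) y = ⊤ := by
  intro y hy
  suffices xiInf μ τ ≤ xi (μ.map e) (Function.extend e τ fun _ => ⊤) y by
    rwa [hA3, top_le_iff] at this
  refine xiInf_le_of_forall_isCompact μ τ fun K hK => ?_
  obtain ⟨δ, hδ, hsub⟩ := exists_ball_preimage_subset_compl he.continuous hK hy
  calc xiSet μ τ Kᶜ ≤ xiSet μ τ (e ⁻¹' Metric.ball y δ) := xiSet_anti μ τ hsub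
    _ ≤ xiDelta (μ.map e) (Function.extend e τ fun _ => ⊤) δ y :=
      xiSet_preimage_le_xiSet_map μ τ he.continuous.measurable he.injective _
        Metric.isOpen_ball.measurableSet
    _ ≤ xi (μ.map e) (Function.extend e τ fun _ => ⊤) y :=
      xiDelta_le_xi _ _ hδ y

/-- from Proposition `p:embedding`: embed the Polish space `X` densely in
a compact metric space `Y` (e.g. the closure of `X` in `[0,1]^ℕ`), extend `μ̄` by
`μ̄(Y∖X) = 0` and `τ` by `τ = +∞` on `Y∖X`. If `ξ^∞ = +∞` on `X` (assumption (A3)), then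
`ξ_Y(y) = +∞` for every `y ∈ Y∖X`. -/
theorem stmt18 {X Y : Type*} [MetricSpace X] [PolishSpace X] [MeasurableSpace X] [BorelSpace X]
    [MetricSpace Y] [CompactSpace Y] [MeasurableSpace Y] [BorelSpace Y]
    (e : X → Y) (he : Topology.IsEmbedding e) (hdense : DenseRange e)
    (μ : Measure X) [IsProbabilityMeasure μ] (τ : X → ℝ≥0∞) (hτ : Measurable τ)
    (hA3 : xiInf μ τ = ⊤) :
    ∀ y : Y, y ∉ Set.range e →
      xi (μ.map e) (Function.extend e τ fun _ => ⊤) y = ⊤ :=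
  stmt18_general e he μ τ hA3
end
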